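/- Assume that the zero set N := {(τ,j) ∈ ℤ^m × ℕ : ‖σ(τ,j)‖ = 0} is finite and that for every ε > 0 there exists C > 0 such that ‖σ(τ,j)‖ ≥ C·exp(−ε·w(τ,j)) for all (τ,j) with ‖σ(τ,j)‖ ≠ 0. Then the system is globally hypoelliptic at the Fourier coefficient level: every u : ℤ^m×ℕ → ℂ with GS-growth such that (τ,j) ↦ σ_r(τ,j)·u(τ,j) has GS-decay for each 1 ≤ r ≤ ℓ itself has GS-decay. -/

import Mathlib

/-! Since there are finitely many symbols, the decay bounds for `σ_r u` can be taken uniform in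
`r`, so `‖σ‖ |u| ≤ C e^{-εw}`. Off the finite zero set, (DC) with rate `ε/2` gives
`‖σ‖ ≥ c e^{-εw/2}`, hence `|u| ≤ (C/c) e^{-εw/2}`; on the zero set a constant suffices. -/

open Real

/-- Euclidean norm of an integer vector `τ ∈ ℤ^m`. -/
noncomputable def eNormZ {m : ℕ} (τ : Fin m → ℤ) : ℝ :=
  Real.sqrt (∑ i, ((τ i : ℝ)) ^ 2)

/-- The weight `w(τ,j) = ‖τ‖^(1/σ) + j^(1/(2nμ))`. -/
noncomputable def wgt (m n : ℕ) (σ μ : ℝ) (τ : Fin m → ℤ) (j : ℕ) : ℝ :=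
  eNormZ τ ^ (1 / σ) + (j : ℝ) ^ (1 / (2 * n * μ))

/-- GS-decay: `|a(τ,j)| ≤ C exp(-ε w(τ,j))` for some `C, ε > 0`. -/
def GSDecay (m n : ℕ) (σ μ : ℝ) (a : (Fin m → ℤ) → ℕ → ℂ) : Prop :=
  ∃ C > 0, ∃ ε > 0, ∀ τ j, ‖a τ j‖ ≤ C * Real.exp (-ε * wgt m n σ μ τ j)

/-- GS-growth: for all `ε > 0` there is `C > 0` with `|a(τ,j)| ≤ C exp(ε w(τ,j))`. -/
def GSGrowth (m n : ℕ) (σ μ : ℝ) (a : (Fin m → ℤ) → ℕ → ℂ) : Prop :=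
  ∀ ε > 0, ∃ C > 0, ∀ τ j, ‖a τ j‖ ≤ C * Real.exp (ε * wgt m n σ μ τ j)

/-- Symbol of the operator `L_r = Q_r(D_t) + d_r P(x,D_x)`: `σ_r(τ,j) = Q_r(τ) + d_r λ_j`. -/
noncomputable def symb {m ℓ : ℕ} (Q : Fin ℓ → MvPolynomial (Fin m) ℂ)
    (d : Fin ℓ → ℂ) (lam : ℕ → ℝ) (r : Fin ℓ) (τ : Fin m → ℤ) (j : ℕ) : ℂ :=
  MvPolynomial.eval (fun i => ((τ i : ℂ))) (Q r) + d r * (lam j : ℂ)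

/-- `‖σ(τ,j)‖ = max_{1 ≤ r ≤ ℓ} |σ_r(τ,j)|`. -/
noncomputable def symbNorm {m ℓ : ℕ} (Q : Fin ℓ → MvPolynomial (Fin m) ℂ)
    (d : Fin ℓ → ℂ) (lam : ℕ → ℝ) (τ : Fin m → ℤ) (j : ℕ) : ℝ :=
  ⨆ r : Fin ℓ, ‖symb Q d lam r τ j‖

/-- The Diophantine condition (DC). -/
def DioCond (m n ℓ : ℕ) (σ μ : ℝ) (Q : Fin ℓ → MvPolynomial (Fin m) ℂ)
    (d : Fin ℓ → ℂ) (lam : ℕ → ℝ) : Prop :=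
  ∀ ε > 0, ∃ C > 0, ∀ τ j, symbNorm Q d lam τ j ≠ 0 →
    symbNorm Q d lam τ j ≥ C * Real.exp (-ε * wgt m n σ μ τ j)

/-- Global hypoellipticity at the Fourier coefficient level. -/
def GloballyHypoelliptic (m n ℓ : ℕ) (σ μ : ℝ) (Q : Fin ℓ → MvPolynomial (Fin m) ℂ)
    (d : Fin ℓ → ℂ) (lam : ℕ → ℝ) : Prop :=
  ∀ u : (Fin m → ℤ) → ℕ → ℂ, GSGrowth m n σ μ u →
    (∀ r : Fin ℓ, GSDecay m n σ μ (fun τ j => symb Q d lam r τ j * u τ j)) →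
    GSDecay m n σ μ u

/-- Admissible families (compatibility conditions). -/
def Admissible {m ℓ : ℕ} (Q : Fin ℓ → MvPolynomial (Fin m) ℂ) (d : Fin ℓ → ℂ)
    (lam : ℕ → ℝ) (f : Fin ℓ → (Fin m → ℤ) → ℕ → ℂ) : Prop :=
  (∀ r s τ j, symb Q d lam r τ j * f s τ j = symb Q d lam s τ j * f r τ j) ∧
  (∀ r τ j, symb Q d lam r τ j = 0 → f r τ j = 0)

/-- Global solvability at the Fourier coefficient level. -/
def GloballySolvable (m n ℓ : ℕ) (σ μ : ℝ) (Q : Fin ℓ → MvPolynomial (Fin m) ℂ)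
    (d : Fin ℓ → ℂ) (lam : ℕ → ℝ) : Prop :=
  ∀ f : Fin ℓ → (Fin m → ℤ) → ℕ → ℂ, Admissible Q d lam f →
    (∀ r, GSGrowth m n σ μ (f r)) →
    ∃ u : (Fin m → ℤ) → ℕ → ℂ, GSGrowth m n σ μ u ∧
      ∀ r τ j, symb Q d lam r τ j * u τ j = f r τ j

def ExpDecay {X : Type*} (w f : X → ℝ) : Prop :=
  ∃ C > 0, ∃ ε > 0, ∀ x, f x ≤ C * Real.exp (-ε * w x)

namespace ExpDecay

variable {X ι : Type*} {w : X → ℝ}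

theorem exists_uniform [Finite ι] [Nonempty ι] (hw : ∀ x, 0 ≤ w x) {f : ι → X → ℝ}
    (hf : ∀ i, ExpDecay w (f i)) :
    ∃ C > 0, ∃ ε > 0, ∀ i x, f i x ≤ C * Real.exp (-ε * w x) := by
  have := Fintype.ofFinite ι
  choose C hC ε hε hbound using hf
  have hne : (Finset.univ : Finset ι).Nonempty := Finset.univ_nonempty
  refine ⟨Finset.univ.sup' hne C, ?_, Finset.univ.inf' hne ε, ?_, fun i x => ?_⟩
  · obtain ⟨i⟩ := ‹Nonempty ι›
    exact (hC i).trans_le (Finset.le_sup' C (Finset.mem_univ i))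
  · exact (Finset.lt_inf'_iff hne).2 fun i _ => hε i
  · have hCi : C i ≤ Finset.univ.sup' hne C := Finset.le_sup' C (Finset.mem_univ i)
    have hεi : Finset.univ.inf' hne ε ≤ ε i := Finset.inf'_le ε (Finset.mem_univ i)
    calc f i x ≤ C i * Real.exp (-ε i * w x) := hbound i x
      _ ≤ Finset.univ.sup' hne C * Real.exp (-Finset.univ.inf' hne ε * w x) := by
        gcongr
        · exact (hC i).le.trans hCi
        · exact hw x

theorem iSup [Finite ι] [Nonempty ι] (hw : ∀ x, 0 ≤ w x) {f : ι → X → ℝ}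
    (hf : ∀ i, ExpDecay w (f i)) : ExpDecay w fun x => ⨆ i, f i x := by
  obtain ⟨C, hC, ε, hε, hbound⟩ := exists_uniform hw hf
  exact ⟨C, hC, ε, hε, fun x => ciSup_le fun i => hbound i x⟩

theorem of_mul {s f : X → ℝ} (hf : ∀ x, 0 ≤ f x) (hZ : {x | s x = 0}.Finite)
    (hs : ∀ δ > 0, ∃ c > 0, ∀ x, s x ≠ 0 → s x ≥ c * Real.exp (-δ * w x))
    (hsf : ExpDecay w fun x => s x * f x) : ExpDecay w f := by
  obtain ⟨C, hC, ε, hε, hbound⟩ := hsf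
  obtain ⟨c, hc, hlow⟩ := hs (ε / 2) (by positivity)
  obtain ⟨B, hB⟩ := (hZ.image fun x => f x * Real.exp (ε / 2 * w x)).bddAbove
  refine ⟨max (C / c) B, lt_max_of_lt_left (by positivity), ε / 2, by positivity, fun x => ?_⟩
  set e := Real.exp (-(ε / 2) * w x)
  have he : 0 < e := Real.exp_pos _
  by_cases hx : s x = 0
  · have hfB : f x * Real.exp (ε / 2 * w x) ≤ B := hB ⟨x, hx, rfl⟩
    calc f x = f x * Real.exp (ε / 2 * w x) * e := by
          rw [mul_assoc, ← Real.exp_add]; ring_nf; rw [Real.exp_zero, mul_one]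
      _ ≤ max (C / c) B * e := by gcongr; exact hfB.trans (le_max_right _ _)
  · have hcf : c * f x * e ≤ C * e * e :=
      calc c * f x * e = c * e * f x := by ring
        _ ≤ s x * f x := mul_le_mul_of_nonneg_right (hlow x hx) (hf x)
        _ ≤ C * Real.exp (-ε * w x) := hbound x
        _ = C * e * e := by rw [mul_assoc, ← Real.exp_add]; ring_nf
    have hfx : f x ≤ C / c * e := by
      rw [div_mul_eq_mul_div, le_div_iff₀ hc]
      linarith [le_of_mul_le_mul_right hcf he]
    exact hfx.trans (by gcongr; exact le_max_left _ _)

end ExpDecay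

theorem gsDecay_iff_expDecay {m n : ℕ} {σ μ : ℝ} {a : (Fin m → ℤ) → ℕ → ℂ} :
    GSDecay m n σ μ a ↔
      ExpDecay (fun p : (Fin m → ℤ) × ℕ => wgt m n σ μ p.1 p.2) fun p => ‖a p.1 p.2‖ := by
  simp only [GSDecay, ExpDecay, Prod.forall]

theorem wgt_nonneg (m n : ℕ) (σ μ : ℝ) (τ : Fin m → ℤ) (j : ℕ) : 0 ≤ wgt m n σ μ τ j :=
  add_nonneg (Real.rpow_nonneg (Real.sqrt_nonneg _) _) (Real.rpow_nonneg j.cast_nonneg _)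

theorem symbNorm_mul_norm {m ℓ : ℕ} (Q : Fin ℓ → MvPolynomial (Fin m) ℂ) (d : Fin ℓ → ℂ)
    (lam : ℕ → ℝ) (u : (Fin m → ℤ) → ℕ → ℂ) (τ : Fin m → ℤ) (j : ℕ) :
    symbNorm Q d lam τ j * ‖u τ j‖ = ⨆ r, ‖symb Q d lam r τ j * u τ j‖ := by
  simp only [symbNorm, Real.iSup_mul_of_nonneg (norm_nonneg _), norm_mul]

theorem statement3_general (m n ℓ : ℕ) (hℓ : 1 ≤ ℓ)
    (σ μ : ℝ)
    (Q : Fin ℓ → MvPolynomial (Fin m) ℂ) (d : Fin ℓ → ℂ) (lam : ℕ → ℝ)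
    (hN : {p : (Fin m → ℤ) × ℕ | symbNorm Q d lam p.1 p.2 = 0}.Finite)
    (hDC : ∀ ε > 0, ∃ C > 0, ∀ τ j, symbNorm Q d lam τ j ≠ 0 →
      symbNorm Q d lam τ j ≥ C * Real.exp (-ε * wgt m n σ μ τ j)) :
    ∀ u : (Fin m → ℤ) → ℕ → ℂ, GSGrowth m n σ μ u →
      (∀ r : Fin ℓ, GSDecay m n σ μ (fun τ j => symb Q d lam r τ j * u τ j)) →
      GSDecay m n σ μ u := by
  intro u _ hdec
  have : Nonempty (Fin ℓ) := ⟨⟨0, hℓ⟩⟩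
  have hprod : ExpDecay (fun p : (Fin m → ℤ) × ℕ => wgt m n σ μ p.1 p.2)
      fun p => symbNorm Q d lam p.1 p.2 * ‖u p.1 p.2‖ := by
    simpa only [symbNorm_mul_norm] using ExpDecay.iSup (fun p : _ × _ => wgt_nonneg m n σ μ p.1 p.2)
      fun r => gsDecay_iff_expDecay.1 (hdec r)
  refine gsDecay_iff_expDecay.2 (hprod.of_mul (fun _ => norm_nonneg _) hN fun δ hδ => ?_)
  obtain ⟨c, hc, hlow⟩ := hDC δ hδ
  exact ⟨c, hc, fun p => hlow p.1 p.2⟩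

/-- if the zero set is finite and (DC) holds, the system is globally
hypoelliptic at the Fourier coefficient level. -/
theorem statement3 (m n ℓ : ℕ) (hm : 1 ≤ m) (hn : 1 ≤ n) (hℓ : 1 ≤ ℓ)
    (σ μ : ℝ) (hσ : 1 ≤ σ) (hμ : 1 / 2 ≤ μ)
    (Q : Fin ℓ → MvPolynomial (Fin m) ℂ) (d : Fin ℓ → ℂ) (lam : ℕ → ℝ)
    (hN : {p : (Fin m → ℤ) × ℕ | symbNorm Q d lam p.1 p.2 = 0}.Finite)
    (hDC : ∀ ε > 0, ∃ C > 0, ∀ τ j, symbNorm Q d lam τ j ≠ 0 →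
      symbNorm Q d lam τ j ≥ C * Real.exp (-ε * wgt m n σ μ τ j)) :
    ∀ u : (Fin m → ℤ) → ℕ → ℂ, GSGrowth m n σ μ u →
      (∀ r : Fin ℓ, GSDecay m n σ μ (fun τ j => symb Q d lam r τ j * u τ j)) →
      GSDecay m n σ μ u :=
  statement3_general m n ℓ hℓ σ μ Q d lam hN hDC
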